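/- arXiv:0805.1077 — 2 statements merged into one kernel-verified Lean document; each statement's English description precedes it below -/
import Mathlib

section
/- Let A be an admissible pseudo-Hermitian n×n matrix with eigenvalues λ_p ≥ … ≥ λ_1 > μ_1 ≥ … ≥ μ_q. Then μ_1 = max_{x ∈ ℂⁿ₋} R_A(x); precisely: for every x ∈ ℂⁿ₋ one has R_A(x) ≤ μ_1, and there exists x ∈ ℂⁿ₋ with R_A(x) = μ_1. -/
open Matrix

/-- The signature matrix `J = diag(1,…,1,−1,…,−1)` with `p` ones and `q` minus-ones. -/
noncomputable def Jmat (p q : ℕ) : Matrix (Fin (p + q)) (Fin (p + q)) ℂ :=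
  Matrix.diagonal (fun i => if (i : ℕ) < p then 1 else -1)

/-- The indefinite pairing `⟨z,w⟩ = Σ_{i<p} z_i conj(w_i) − Σ_{i≥p} z_i conj(w_i)`;
equivalently `w† · z` where `x† = (J conj(x))ᵀ`. -/
noncomputable def pairing (p q : ℕ) (z w : Fin (p + q) → ℂ) : ℂ :=
  ∑ i : Fin (p + q),
    (if (i : ℕ) < p then z i * (starRingEnd ℂ) (w i) else -(z i * (starRingEnd ℂ) (w i)))

/-- The diagonal entries of `Λ = diag(λ_p, …, λ_1, μ_1, …, μ_q)`, where `lam` and `mu`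
are 0-indexed: `lam i = λ_{i+1}` and `mu j = μ_{j+1}`. -/
noncomputable def diagEntries (p q : ℕ) (lam : Fin p → ℝ) (mu : Fin q → ℝ) :
    Fin (p + q) → ℂ :=
  fun i =>
    if h : (i : ℕ) < p then ((lam ⟨p - 1 - (i : ℕ), by omega⟩ : ℝ) : ℂ)
    else ((mu ⟨(i : ℕ) - p, by have := i.isLt; omega⟩ : ℝ) : ℂ)

/-- `A` is an admissible pseudo-Hermitian matrix with (real) eigenvalues
`λ_p ≥ … ≥ λ_1 > μ_1 ≥ … ≥ μ_q`, recorded 0-indexed as `lam i = λ_{i+1}` (so `lam` is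
monotone) and `mu j = μ_{j+1}` (so `mu` is antitone), with `λ_1 > μ_1`, and
`A = U Λ U⁻¹` for some invertible `U` with `U J Uᴴ = J`. -/
def IsAdmissible (p q : ℕ) (hp : 0 < p) (hq : 0 < q)
    (A : Matrix (Fin (p + q)) (Fin (p + q)) ℂ)
    (lam : Fin p → ℝ) (mu : Fin q → ℝ) : Prop :=
  A * Jmat p q = Jmat p q * A.conjTranspose ∧
  Monotone lam ∧ Antitone mu ∧ mu ⟨0, hq⟩ < lam ⟨0, hp⟩ ∧
  ∃ U : Matrix (Fin (p + q)) (Fin (p + q)) ℂ,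
    IsUnit U ∧ U * Jmat p q * U.conjTranspose = Jmat p q ∧
    A = U * Matrix.diagonal (diagEntries p q lam mu) * U⁻¹

/-- The Rayleigh ratio `R_A(x) = (x† A x)/(x† x)`, as a real number (for admissible
pseudo-Hermitian `A` both `x† A x` and `x† x` are real). -/
noncomputable def rayleigh (p q : ℕ) (A : Matrix (Fin (p + q)) (Fin (p + q)) ℂ)
    (x : Fin (p + q) → ℂ) : ℝ :=
  (pairing p q (A.mulVec x) x).re / (pairing p q x x).re

/-!
Since `U J Uᴴ = J`, the substitution `x = U y` preserves the indefinite pairing and turns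
`A = U Λ U⁻¹` into the diagonal `Λ`, so it suffices to treat `A = Λ`. There
`⟨Λy, y⟩ - μ₁⟨y, y⟩` is a sum of terms `(λ_k - μ₁)|y_i|²` over the first `p` coordinates and
`(μ₁ - μ_k)|y_i|²` over the last `q`, all nonnegative, and dividing by `⟨y, y⟩ < 0` gives
`R_Λ(y) ≤ μ₁`. Equality holds at the basis vector `e_{p+1}`, which has `⟨e, e⟩ = -1`.
-/

section Pseudounitary

variable {p q : ℕ}

theorem Jmat_mul_Jmat : Jmat p q * Jmat p q = 1 := by
  rw [Jmat, diagonal_mul_diagonal, ← diagonal_one]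
  congr 1
  ext i
  split_ifs <;> norm_num

theorem pairing_eq_dotProduct (z w : Fin (p + q) → ℂ) :
    pairing p q z w = star w ⬝ᵥ (Jmat p q *ᵥ z) := by
  simp only [pairing, Jmat, dotProduct, mulVec_diagonal, Pi.star_apply, Complex.star_def]
  refine Finset.sum_congr rfl fun i _ => ?_
  split_ifs <;> ring

variable {U : Matrix (Fin (p + q)) (Fin (p + q)) ℂ}

theorem mul_Jmat_conjTranspose_mul_Jmat (hU : U * Jmat p q * Uᴴ = Jmat p q) :
    U * (Jmat p q * Uᴴ * Jmat p q) = 1 := by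
  rw [← Matrix.mul_assoc, ← Matrix.mul_assoc, hU, Jmat_mul_Jmat]

theorem conjTranspose_mul_Jmat_mul (hU : U * Jmat p q * Uᴴ = Jmat p q) :
    Uᴴ * Jmat p q * U = Jmat p q := by
  have hleft : Jmat p q * Uᴴ * Jmat p q * U = 1 :=
    mul_eq_one_comm.mp (mul_Jmat_conjTranspose_mul_Jmat hU)
  calc Uᴴ * Jmat p q * U = Jmat p q * (Jmat p q * Uᴴ * Jmat p q * U) := by
        simp only [← Matrix.mul_assoc, Jmat_mul_Jmat, Matrix.one_mul]
    _ = Jmat p q := by rw [hleft, Matrix.mul_one]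

theorem pairing_mulVec_mulVec (hU : Uᴴ * Jmat p q * U = Jmat p q) (z w : Fin (p + q) → ℂ) :
    pairing p q (U *ᵥ z) (U *ᵥ w) = pairing p q z w := by
  rw [pairing_eq_dotProduct, pairing_eq_dotProduct, mulVec_mulVec, star_mulVec,
    dotProduct_mulVec, vecMul_vecMul, ← Matrix.mul_assoc, hU, ← dotProduct_mulVec]

theorem rayleigh_mul_mul_inv (hU : U * Jmat p q * Uᴴ = Jmat p q)
    (D : Matrix (Fin (p + q)) (Fin (p + q)) ℂ) (y : Fin (p + q) → ℂ) :
    rayleigh p q (U * D * U⁻¹) (U *ᵥ y) = rayleigh p q D y := by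
  have hinv : U⁻¹ * U = 1 := by
    rw [inv_eq_right_inv (mul_Jmat_conjTranspose_mul_Jmat hU)]
    exact mul_eq_one_comm.mp (mul_Jmat_conjTranspose_mul_Jmat hU)
  have hisom := conjTranspose_mul_Jmat_mul hU
  rw [rayleigh, rayleigh, mulVec_mulVec, Matrix.mul_assoc, Matrix.mul_assoc, hinv,
    Matrix.mul_one, ← mulVec_mulVec, pairing_mulVec_mulVec hisom, pairing_mulVec_mulVec hisom]

end Pseudounitary

section Diagonal

variable {p q : ℕ}

theorem re_pairing_diagonal_mulVec (d : Fin (p + q) → ℝ) (y : Fin (p + q) → ℂ) :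
    (pairing p q (diagonal (fun i => (d i : ℂ)) *ᵥ y) y).re =
      ∑ i : Fin (p + q), (if (i : ℕ) < p then d i else -d i) * Complex.normSq (y i) := by
  rw [pairing, Complex.re_sum]
  refine Finset.sum_congr rfl fun i _ => ?_
  rw [mulVec_diagonal, mul_assoc, Complex.mul_conj]
  split_ifs <;> simp [← Complex.ofReal_mul]

theorem re_pairing_self (y : Fin (p + q) → ℂ) :
    (pairing p q y y).re =
      ∑ i : Fin (p + q), (if (i : ℕ) < p then 1 else -1) * Complex.normSq (y i) := by
  simpa using re_pairing_diagonal_mulVec (p := p) (q := q) 1 y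

theorem rayleigh_diagonal_le {d : Fin (p + q) → ℝ} {m : ℝ}
    (hlow : ∀ i : Fin (p + q), (i : ℕ) < p → m ≤ d i)
    (hupp : ∀ i : Fin (p + q), p ≤ (i : ℕ) → d i ≤ m)
    {y : Fin (p + q) → ℂ} (hy : (pairing p q y y).re < 0) :
    rayleigh p q (diagonal (fun i => (d i : ℂ))) y ≤ m := by
  rw [rayleigh, div_le_iff_of_neg hy, re_pairing_diagonal_mulVec, re_pairing_self,
    Finset.mul_sum]
  refine Finset.sum_le_sum fun i _ => ?_
  have hnorm := Complex.normSq_nonneg (y i)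
  split_ifs with hi
  · nlinarith [hlow i hi]
  · nlinarith [hupp i (not_lt.mp hi)]

theorem re_pairing_single_self (k : Fin (p + q)) :
    (pairing p q (Pi.single k 1) (Pi.single k 1)).re = if (k : ℕ) < p then 1 else -1 := by
  rw [re_pairing_self, Finset.sum_eq_single k (fun i _ hik => by simp [hik]) (by simp)]
  simp

theorem rayleigh_diagonal_single (d : Fin (p + q) → ℝ) (k : Fin (p + q)) :
    rayleigh p q (diagonal (fun i => (d i : ℂ))) (Pi.single k 1) = d k := by
  rw [rayleigh, re_pairing_diagonal_mulVec, re_pairing_single_self,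
    Finset.sum_eq_single k (fun i _ hik => by simp [hik]) (by simp)]
  split_ifs <;> simp

end Diagonal

noncomputable def realDiagEntries (p q : ℕ) (lam : Fin p → ℝ) (mu : Fin q → ℝ) :
    Fin (p + q) → ℝ :=
  fun i =>
    if h : (i : ℕ) < p then lam ⟨p - 1 - (i : ℕ), by omega⟩
    else mu ⟨(i : ℕ) - p, by have := i.isLt; omega⟩

theorem diagEntries_eq_ofReal (p q : ℕ) (lam : Fin p → ℝ) (mu : Fin q → ℝ) :
    diagEntries p q lam mu = fun i => (realDiagEntries p q lam mu i : ℂ) := by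
  ext i
  simp only [diagEntries, realDiagEntries]
  split_ifs <;> rfl

/-- for admissible pseudo-Hermitian `A`,
`μ_1 = max_{x ∈ ℂⁿ₋} R_A(x)`. -/
theorem mu_one_is_max_of_rayleigh_on_neg_cone
    (p q : ℕ) (hp : 0 < p) (hq : 0 < q)
    (A : Matrix (Fin (p + q)) (Fin (p + q)) ℂ)
    (lam : Fin p → ℝ) (mu : Fin q → ℝ)
    (hA : IsAdmissible p q hp hq A lam mu) :
    (∀ x : Fin (p + q) → ℂ, (pairing p q x x).re < 0 →
        rayleigh p q A x ≤ mu ⟨0, hq⟩) ∧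
    (∃ x : Fin (p + q) → ℂ, (pairing p q x x).re < 0 ∧
        rayleigh p q A x = mu ⟨0, hq⟩) := by
  obtain ⟨-, hlam, hmu, hlt, U, hUunit, hUJ, rfl⟩ := hA
  rw [diagEntries_eq_ofReal]
  have hisom := conjTranspose_mul_Jmat_mul hUJ
  refine ⟨fun x hx => ?_, ⟨U *ᵥ Pi.single ⟨p, by omega⟩ 1, ?_, ?_⟩⟩
  · obtain ⟨y, rfl⟩ : ∃ y, U *ᵥ y = x := (mulVec_surjective_iff_isUnit.mpr hUunit) x
    rw [pairing_mulVec_mulVec hisom] at hx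
    rw [rayleigh_mul_mul_inv hUJ]
    refine rayleigh_diagonal_le (fun i hi => ?_) (fun i hi => ?_) hx
    · simpa [realDiagEntries, hi] using hlt.le.trans (hlam (Fin.mk_le_mk.mpr (Nat.zero_le _)))
    · simpa [realDiagEntries, hi.not_gt] using hmu (Fin.mk_le_mk.mpr (Nat.zero_le _))
  · rw [pairing_mulVec_mulVec hisom, re_pairing_single_self]
    norm_num
  · rw [rayleigh_mul_mul_inv hUJ, rayleigh_diagonal_single]
    simp [realDiagEntries]
end

section
/- Let A be an admissible pseudo-Hermitian n×n matrix with eigenvalues λ_p ≥ … ≥ λ_1 > μ_1 ≥ … ≥ μ_q and pseudo-orthonormal eigenbasis v_1,…,v_p, w_1,…,w_q, and let V = span{v_1,…,v_p}. For each 1 ≤ k ≤ p, λ_k = max of R_A(x) over nonzero x ∈ V satisfying ⟨x, v_i⟩ = 0 for all k+1 ≤ i ≤ p; precisely: every such x lies in ℂⁿ₊ and satisfies R_A(x) ≤ λ_k, and equality holds for x = v_k. -/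
open Matrix

/-- A pseudo-orthonormal eigenbasis `v_1, …, v_p, w_1, …, w_q` (0-indexed) of an admissible
matrix `A`: a basis of `ℂⁿ` with `A v_i = λ_i v_i`, `A w_j = μ_j w_j`, `⟨v_i,v_i⟩ = 1`,
`⟨w_j,w_j⟩ = −1`, and all pairings of distinct basis vectors zero. -/
def IsPseudoONEigenbasis (p q : ℕ) (A : Matrix (Fin (p + q)) (Fin (p + q)) ℂ)
    (lam : Fin p → ℝ) (mu : Fin q → ℝ)
    (v : Fin p → Fin (p + q) → ℂ) (w : Fin q → Fin (p + q) → ℂ) : Prop :=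
  LinearIndependent ℂ (Fin.append v w) ∧
  Submodule.span ℂ (Set.range (Fin.append v w)) = ⊤ ∧
  (∀ i, A.mulVec (v i) = (lam i : ℂ) • v i) ∧
  (∀ j, A.mulVec (w j) = (mu j : ℂ) • w j) ∧
  (∀ i i', pairing p q (v i) (v i') = if i = i' then 1 else 0) ∧
  (∀ j j', pairing p q (w j) (w j') = if j = j' then -1 else 0) ∧
  (∀ i j, pairing p q (v i) (w j) = 0) ∧
  (∀ j i, pairing p q (w j) (v i) = 0)

/-!
Write `x = ∑ cᵢ vᵢ`. Pseudo-orthonormality of the `vᵢ` gives `⟨x, vᵢ⟩ = cᵢ`, `⟨x, x⟩ = ∑ |cᵢ|²` and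
`⟨A x, x⟩ = ∑ λᵢ |cᵢ|²`, so `R_A(x)` is a weighted average of the `λᵢ` with `cᵢ ≠ 0`. Orthogonality
to `v_{k+1}, …, v_p` removes every eigenvalue above `λ_k` from that average.
-/

lemma pairing_eq_sum_sign_mul (p q : ℕ) (z w : Fin (p + q) → ℂ) :
    pairing p q z w = ∑ i : Fin (p + q), (if (i : ℕ) < p then 1 else -1) * (z i * star (w i)) := by
  unfold pairing
  congr! 1 with i
  split_ifs <;> simp

noncomputable def pairingₛₗ (p q : ℕ) :
    (Fin (p + q) → ℂ) →ₗ[ℂ] (Fin (p + q) → ℂ) →ₗ⋆[ℂ] ℂ :=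
  LinearMap.mk₂'ₛₗ (RingHom.id ℂ) (starRingEnd ℂ) (pairing p q)
    (fun _ _ _ => by
      simp only [pairing_eq_sum_sign_mul, Pi.add_apply, add_mul, mul_add, Finset.sum_add_distrib])
    (fun _ _ _ => by
      simp only [pairing_eq_sum_sign_mul, Pi.smul_apply, smul_eq_mul, Finset.mul_sum,
        RingHom.id_apply]
      exact Finset.sum_congr rfl fun _ _ => by ring)
    (fun _ _ _ => by
      simp only [pairing_eq_sum_sign_mul, Pi.add_apply, star_add, mul_add, Finset.sum_add_distrib])
    (fun _ _ _ => by
      simp only [pairing_eq_sum_sign_mul, Pi.smul_apply, smul_eq_mul, star_mul', Finset.mul_sum,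
        starRingEnd_apply]
      exact Finset.sum_congr rfl fun _ _ => by ring)

@[simp]
lemma pairingₛₗ_apply (p q : ℕ) (z w : Fin (p + q) → ℂ) : pairingₛₗ p q z w = pairing p q z w :=
  rfl

section Orthonormal

variable {R M ι : Type*} [CommSemiring R] [StarRing R] [AddCommMonoid M] [Module R M]
  [Fintype ι] [DecidableEq ι] {B : M →ₗ[R] M →ₗ⋆[R] R} {v : ι → M}

lemma sesqForm_sum_smul_left_of_orthonormal
    (hv : ∀ i j, B (v i) (v j) = if i = j then 1 else 0) (c : ι → R) (j : ι) :
    B (∑ i, c i • v i) (v j) = c j := by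
  simp [map_sum, LinearMap.sum_apply, hv]

lemma sesqForm_sum_smul_right_of_orthonormal
    (hv : ∀ i j, B (v i) (v j) = if i = j then 1 else 0) (c : ι → R) (i : ι) :
    B (v i) (∑ j, c j • v j) = star (c i) := by
  simp [map_sum, hv, starRingEnd_apply]

lemma sesqForm_sum_smul_sum_smul_of_orthonormal
    (hv : ∀ i j, B (v i) (v j) = if i = j then 1 else 0) (c d : ι → R) :
    B (∑ i, c i • v i) (∑ j, d j • v j) = ∑ i, c i * star (d i) := by
  simp only [map_sum B, LinearMap.sum_apply, map_smul, LinearMap.smul_apply, smul_eq_mul,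
    sesqForm_sum_smul_right_of_orthonormal hv]

end Orthonormal

lemma sum_mul_le_mul_sum_of_ne_zero {ι : Type*} [Fintype ι] {f a : ι → ℝ} {b : ℝ}
    (ha : ∀ i, 0 ≤ a i) (hf : ∀ i, a i ≠ 0 → f i ≤ b) :
    ∑ i, f i * a i ≤ b * ∑ i, a i := by
  rw [Finset.mul_sum]
  refine Finset.sum_le_sum fun i _ => ?_
  rcases eq_or_ne (a i) 0 with hai | hai
  · simp [hai]
  · exact mul_le_mul_of_nonneg_right (hf i hai) (ha i)

section Eigenvectors

variable {p q : ℕ} {A : Matrix (Fin (p + q)) (Fin (p + q)) ℂ} {lam : Fin p → ℝ}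
  {v : Fin p → Fin (p + q) → ℂ}

lemma mulVec_sum_smul_eigenvectors (hAv : ∀ i, A *ᵥ v i = (lam i : ℂ) • v i) (c : Fin p → ℂ) :
    A *ᵥ ∑ i, c i • v i = ∑ i, (c i * lam i) • v i := by
  simp only [Matrix.mulVec_sum, Matrix.mulVec_smul, hAv, smul_smul]

variable (hvv : ∀ i i', pairing p q (v i) (v i') = if i = i' then 1 else 0)
include hvv

lemma pairing_sum_smul_left (c : Fin p → ℂ) (j : Fin p) :
    pairing p q (∑ i, c i • v i) (v j) = c j :=
  sesqForm_sum_smul_left_of_orthonormal (B := pairingₛₗ p q) hvv c j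

lemma pairing_sum_smul_self_re (c : Fin p → ℂ) :
    (pairing p q (∑ i, c i • v i) (∑ i, c i • v i)).re = ∑ i, Complex.normSq (c i) := by
  rw [← pairingₛₗ_apply, sesqForm_sum_smul_sum_smul_of_orthonormal (B := pairingₛₗ p q) hvv]
  simp [Complex.mul_conj, ← Complex.ofReal_sum]

lemma pairing_mulVec_sum_smul_re (hAv : ∀ i, A *ᵥ v i = (lam i : ℂ) • v i) (c : Fin p → ℂ) :
    (pairing p q (A *ᵥ ∑ i, c i • v i) (∑ i, c i • v i)).re =
      ∑ i, lam i * Complex.normSq (c i) := by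
  rw [mulVec_sum_smul_eigenvectors hAv, ← pairingₛₗ_apply,
    sesqForm_sum_smul_sum_smul_of_orthonormal (B := pairingₛₗ p q) hvv, Complex.re_sum]
  refine Finset.sum_congr rfl fun i _ => ?_
  rw [mul_right_comm, ← starRingEnd_apply, Complex.mul_conj, ← Complex.ofReal_mul,
    Complex.ofReal_re, mul_comm]

lemma pairing_sum_smul_self_re_pos {c : Fin p → ℂ} (hc : c ≠ 0) :
    0 < (pairing p q (∑ i, c i • v i) (∑ i, c i • v i)).re := by
  obtain ⟨i, hi⟩ := Function.ne_iff.mp hc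
  rw [pairing_sum_smul_self_re hvv]
  exact Finset.sum_pos' (fun j _ => Complex.normSq_nonneg _)
    ⟨i, Finset.mem_univ _, Complex.normSq_pos.mpr hi⟩

lemma rayleigh_eigenvector (hAv : ∀ i, A *ᵥ v i = (lam i : ℂ) • v i) (i : Fin p) :
    rayleigh p q A (v i) = lam i := by
  rw [rayleigh, hAv, ← pairingₛₗ_apply, map_smul, LinearMap.smul_apply, pairingₛₗ_apply, hvv]
  simp

lemma rayleigh_sum_smul_le (hlam : Monotone lam) (hAv : ∀ i, A *ᵥ v i = (lam i : ℂ) • v i)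
    {c : Fin p → ℂ} (hc : c ≠ 0) {K : Fin p} (hcK : ∀ i, K < i → c i = 0) :
    rayleigh p q A (∑ i, c i • v i) ≤ lam K := by
  rw [rayleigh, div_le_iff₀ (pairing_sum_smul_self_re_pos hvv hc),
    pairing_mulVec_sum_smul_re hvv hAv, pairing_sum_smul_self_re hvv]
  refine sum_mul_le_mul_sum_of_ne_zero (fun _ => Complex.normSq_nonneg _) fun i hi => hlam ?_
  exact not_lt.mp fun hKi => hi (by rw [hcK i hKi, map_zero])

end Eigenvectors

/-- `λ_k` is the maximum of `R_A(x)` over nonzero `x ∈ V = span{v_1,…,v_p}`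
orthogonal to `v_{k+1}, …, v_p`; every such `x` lies in `ℂⁿ₊`, and the maximum is
attained at `v_k`.  (`k` is 1-indexed, `1 ≤ k ≤ p`.) -/
theorem lambda_k_max_orthogonal_to_higher_eigenvectors
    (p q : ℕ) (hp : 0 < p) (hq : 0 < q)
    (A : Matrix (Fin (p + q)) (Fin (p + q)) ℂ)
    (lam : Fin p → ℝ) (mu : Fin q → ℝ)
    (v : Fin p → Fin (p + q) → ℂ) (w : Fin q → Fin (p + q) → ℂ)
    (hA : IsAdmissible p q hp hq A lam mu)
    (hvw : IsPseudoONEigenbasis p q A lam mu v w)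
    (k : ℕ) (hk1 : 1 ≤ k) (hk2 : k ≤ p) :
    (∀ x : Fin (p + q) → ℂ, x ∈ Submodule.span ℂ (Set.range v) → x ≠ 0 →
        (∀ i : Fin p, k ≤ (i : ℕ) → pairing p q x (v i) = 0) →
        0 < (pairing p q x x).re ∧ rayleigh p q A x ≤ lam ⟨k - 1, by omega⟩) ∧
    rayleigh p q A (v ⟨k - 1, by omega⟩) = lam ⟨k - 1, by omega⟩ := by
  obtain ⟨-, hlam, -, -, -⟩ := hA
  obtain ⟨-, -, hAv, -, hvv, -, -, -⟩ := hvw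
  refine ⟨fun x hx hx0 horth => ?_, rayleigh_eigenvector hvv hAv _⟩
  obtain ⟨c, rfl⟩ := (Submodule.mem_span_range_iff_exists_fun ℂ).mp hx
  have hc : c ≠ 0 := by
    rintro rfl
    simp at hx0
  have hcK : ∀ i, (⟨k - 1, by omega⟩ : Fin p) < i → c i = 0 := fun i hi => by
    rw [← pairing_sum_smul_left hvv c i]
    exact horth i (by rw [Fin.lt_def, Fin.val_mk] at hi; omega)
  exact ⟨pairing_sum_smul_self_re_pos hvv hc, rayleigh_sum_smul_le hvv hlam hAv hc hcK⟩
end
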